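/- Let G be a connected bridged graph and let s, t be vertices of G. Then any two s–t shortest paths in G are reconfigurable. -/

import Mathlib

/-- Two lists (vertex sequences) differ in exactly one position. -/
def OneStep {α : Type*} (l₁ l₂ : List α) : Prop :=
  l₁.length = l₂.length ∧ ∃ i : ℕ, l₁[i]? ≠ l₂[i]? ∧ ∀ j, j ≠ i → l₁[j]? = l₂[j]?

/-- One reconfiguration step between `s`–`t` shortest paths: both walks are shortest
and their vertex sequences differ in exactly one position. -/
def ShortestStep {V : Type*} (G : SimpleGraph V) (s t : V) (p q : G.Walk s t) : Prop :=
  p.length = G.dist s t ∧ q.length = G.dist s t ∧ OneStep p.support q.support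

/-- Two `s`–`t` shortest paths are reconfigurable if they are joined by a sequence of
`s`–`t` shortest paths in which consecutive paths differ in exactly one position. -/
def Reconfigurable {V : Type*} (G : SimpleGraph V) (s t : V) (p q : G.Walk s t) : Prop :=
  Relation.ReflTransGen (ShortestStep G s t) p q

/-- The interval `I(u,v)`: all vertices lying on at least one shortest `u`–`v` path. -/
def interval {V : Type*} (G : SimpleGraph V) (u v : V) : Set V :=
  {w : V | G.dist u w + G.dist w v = G.dist u v}

/-- A set of vertices is convex if it contains the interval between any two of its
vertices. -/
def IsConvexSet {V : Type*} (G : SimpleGraph V) (H : Set V) : Prop :=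
  ∀ u ∈ H, ∀ v ∈ H, interval G u v ⊆ H

/-- A graph is bridged if the neighbourhood of every convex set is convex. -/
def Bridged {V : Type*} (G : SimpleGraph V) : Prop :=
  ∀ H : Set V, IsConvexSet G H →
    IsConvexSet G {v : V | ∃ h ∈ H, G.dist v h ≤ 1}

/-!
Induct on `d(s, t)`. Balls are convex in a bridged graph (each is the neighbourhood of the
previous one), so the second vertices `p`, `q` of two shortest `s`–`t` paths are equal or adjacent:
otherwise `s ∈ I(p, q)` would lie in the ball of radius `d(s, t) - 1` around `t`. If `p ~ q`,
the triangle condition gives a common neighbour `z` of `p` and `q` one step closer to `t`; the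
paths `s p z ⋯ t` and `s q z ⋯ t` differ in one position, and the induction hypothesis
reconfigures the tails. The triangle condition comes from convexity of balls, which gives every
4-cycle a chord, and of the neighbourhood of the edge `u v`, which contains a midpoint of the
neighbours of `u` and `v` closer to the base point.
-/

theorem oneStep_cons_of_ne {α : Type*} {a b : α} (h : a ≠ b) (l : List α) :
    OneStep (a :: l) (b :: l) :=
  ⟨rfl, 0, by simpa using h, fun j hj => by
    obtain ⟨j, rfl⟩ := Nat.exists_eq_succ_of_ne_zero hj
    rfl⟩

theorem OneStep.cons {α : Type*} {l₁ l₂ : List α} (a : α) (h : OneStep l₁ l₂) :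
    OneStep (a :: l₁) (a :: l₂) := by
  obtain ⟨hlen, i, hi, hj⟩ := h
  refine ⟨by simp [hlen], i + 1, by simpa using hi, fun j hji => ?_⟩
  cases j with
  | zero => rfl
  | succ j => simpa using hj j (by omega)

namespace SimpleGraph

variable {V : Type*} {G : SimpleGraph V} {s p t u v w : V}

theorem Connected.dist_le_dist_add_one_of_adj (hconn : G.Connected) (h : G.Adj u v) (w : V) :
    G.dist u w ≤ G.dist v w + 1 := by
  have := hconn.dist_triangle (u := u) (v := v) (w := w)
  rw [dist_eq_one_iff_adj.mpr h] at this
  omega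

theorem Connected.exists_adj_dist_eq (hconn : G.Connected) {k : ℕ} (h : G.dist v w = k + 1) :
    ∃ x, G.Adj v x ∧ G.dist x w = k := by
  obtain ⟨p, hp⟩ := hconn.exists_walk_length_eq_dist v w
  cases p with
  | nil => simp at h
  | cons hvx q =>
    have hq : q.length = G.dist _ w := length_eq_dist_of_subwalk hp (q.isSubwalk_cons hvx)
    simp only [Walk.length_cons] at hp
    exact ⟨_, hvx, by omega⟩

theorem Connected.adj_of_dist_le_one (hconn : G.Connected) (h : G.dist u v ≤ 1) (hne : u ≠ v) :
    G.Adj u v := by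
  by_contra hnadj
  have := hconn.one_lt_dist_of_ne_of_not_adj hne hnadj
  omega

theorem Connected.interval_subset_of_dist_le_one (hconn : G.Connected) (h : G.dist u v ≤ 1) :
    interval G u v ⊆ {u, v} := by
  intro x (hx : G.dist u x + G.dist x v = G.dist u v)
  rcases Nat.eq_zero_or_pos (G.dist u x) with hux | hux
  · exact Or.inl (hconn.dist_eq_zero_iff.mp hux).symm
  · exact Or.inr (hconn.dist_eq_zero_iff.mp (by omega))

theorem Connected.isConvexSet_pair (hconn : G.Connected) (h : G.Adj u v) :
    IsConvexSet G {u, v} := by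
  have huv : G.dist u v = 1 := dist_eq_one_iff_adj.mpr h
  have hvu : G.dist v u = 1 := dist_eq_one_iff_adj.mpr h.symm
  have hle : ∀ a ∈ ({u, v} : Set V), ∀ b ∈ ({u, v} : Set V), G.dist a b ≤ 1 := by
    rintro a (rfl | rfl) b (rfl | rfl) <;> simp [huv, hvu]
  exact fun a ha b hb =>
    (hconn.interval_subset_of_dist_le_one (hle a ha b hb)).trans (Set.pair_subset ha hb)

theorem Walk.dist_eq_add_one_of_length_cons_eq_dist {h : G.Adj s p} {A : G.Walk p t}
    (hA : (A.cons h).length = G.dist s t) :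
    A.length = G.dist p t ∧ G.dist s t = G.dist p t + 1 := by
  have hA' := length_eq_dist_of_subwalk hA (A.isSubwalk_cons h)
  rw [Walk.length_cons] at hA
  omega

end SimpleGraph

open SimpleGraph

section

variable {V : Type*} {G : SimpleGraph V} {s p q t u v w : V}

theorem Reconfigurable.cons (h : G.Adj s p) (hd : G.dist s t = G.dist p t + 1)
    {A B : G.Walk p t} (hAB : Reconfigurable G p t A B) :
    Reconfigurable G s t (A.cons h) (B.cons h) :=
  hAB.lift (Walk.cons h) fun _ _ ⟨hA, hB, hstep⟩ =>
    ⟨by rw [Walk.length_cons, hA, hd], by rw [Walk.length_cons, hB, hd],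
      by simpa only [Walk.support_cons] using hstep.cons s⟩

namespace Bridged

theorem isConvexSet_ball (hconn : G.Connected) (hbr : Bridged G) (w : V) :
    ∀ k : ℕ, IsConvexSet G {v | G.dist v w ≤ k}
  | 0 => by
    intro a (ha : G.dist a w ≤ 0) b (hb : G.dist b w ≤ 0) x (hx : G.dist a x + G.dist x b = _)
    obtain rfl := hconn.dist_eq_zero_iff.mp (Nat.le_zero.mp ha)
    obtain rfl := hconn.dist_eq_zero_iff.mp (Nat.le_zero.mp hb)
    rw [dist_self] at hx
    exact (Nat.eq_zero_of_add_eq_zero hx).2.le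
  | k + 1 => by
    have hnbhd :
        {v | ∃ h ∈ {v | G.dist v w ≤ k}, G.dist v h ≤ 1} = {v | G.dist v w ≤ k + 1} := by
      ext v
      refine ⟨fun ⟨h, (hh : G.dist h w ≤ k), hvh⟩ => ?_, fun (hv : G.dist v w ≤ k + 1) => ?_⟩
      · have := hconn.dist_triangle (u := v) (v := h) (w := w)
        show G.dist v w ≤ k + 1
        omega
      · rcases Nat.lt_or_ge (G.dist v w) (k + 1) with hlt | hge
        · exact ⟨v, Nat.le_of_lt_succ hlt, by simp⟩
        · obtain ⟨x, hvx, hxw⟩ := hconn.exists_adj_dist_eq (le_antisymm hv hge)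
          exact ⟨x, hxw.le, (dist_eq_one_iff_adj.mpr hvx).le⟩
    exact hnbhd ▸ hbr _ (isConvexSet_ball hconn hbr w k)

theorem adj_or_adj_of_four_cycle (hconn : G.Connected) (hbr : Bridged G) {a b c d : V}
    (hab : G.Adj a b) (hbc : G.Adj b c) (hcd : G.Adj c d) (hda : G.Adj d a)
    (hac : a ≠ c) (hbd : b ≠ d) : G.Adj a c ∨ G.Adj b d := by
  refine or_iff_not_imp_left.mpr fun hnac => ?_
  have hac2 : G.dist a c = 2 := by
    have := hconn.one_lt_dist_of_ne_of_not_adj hac hnac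
    have := hconn.dist_le_dist_add_one_of_adj hab c
    rw [dist_eq_one_iff_adj.mpr hbc] at this
    omega
  have hb : b ∈ interval G a c := by
    show G.dist a b + G.dist b c = G.dist a c
    rw [dist_eq_one_iff_adj.mpr hab, dist_eq_one_iff_adj.mpr hbc, hac2]
  have hbd1 : G.dist b d ≤ 1 := isConvexSet_ball hconn hbr d 1 a
    (dist_eq_one_iff_adj.mpr hda.symm).le c (dist_eq_one_iff_adj.mpr hcd).le hb
  exact hconn.adj_of_dist_le_one hbd1 hbd

theorem exists_common_adj_of_square (hconn : G.Connected) (hbr : Bridged G) {x y : V} {k : ℕ}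
    (huv : G.Adj u v) (hux : G.Adj u x) (hvy : G.Adj v y) (hxy : G.Adj x y)
    (hu : G.dist u w = k + 1) (hv : G.dist v w = k + 1)
    (hx : G.dist x w ≤ k) (hy : G.dist y w ≤ k) :
    ∃ z, G.Adj u z ∧ G.Adj v z ∧ G.dist z w ≤ k := by
  have hxv : x ≠ v := by rintro rfl; omega
  have huy : u ≠ y := by rintro rfl; omega
  rcases adj_or_adj_of_four_cycle hconn hbr hux.symm huv hvy hxy.symm hxv huy with h | h
  · exact ⟨x, hux, h.symm, hx⟩
  · exact ⟨y, h, hvy, hy⟩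

theorem dist_le_two_of_adj_adj_adj (hconn : G.Connected) (hbr : Bridged G) {x y : V} {k : ℕ}
    (hux : G.Adj u x) (huv : G.Adj u v) (hvy : G.Adj v y) (hu : G.dist u w = k + 1)
    (hx : G.dist x w ≤ k) (hy : G.dist y w ≤ k) : G.dist x y ≤ 2 := by
  have hxu : G.dist x u = 1 := dist_eq_one_iff_adj.mpr hux.symm
  have huy : G.dist u y ≤ 2 := by
    have := hconn.dist_le_dist_add_one_of_adj huv y
    rw [dist_eq_one_iff_adj.mpr hvy] at this
    exact this
  have hxy : G.dist x y ≤ 3 := by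
    have := hconn.dist_triangle (u := x) (v := u) (w := y)
    omega
  refine Nat.le_of_lt_succ (lt_of_le_of_ne hxy fun h3 => ?_)
  have hu_mem : u ∈ interval G x y := by
    show G.dist x u + G.dist u y = G.dist x y
    have := hconn.dist_triangle (u := x) (v := u) (w := y)
    omega
  have : G.dist u w ≤ k := isConvexSet_ball hconn hbr w k x hx y hy hu_mem
  omega

theorem triangle_condition (hconn : G.Connected) (hbr : Bridged G) {k : ℕ}
    (huv : G.Adj u v) (hu : G.dist u w = k + 1) (hv : G.dist v w = k + 1) :
    ∃ z, G.Adj u z ∧ G.Adj v z ∧ G.dist z w = k := by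
  suffices ∃ z, G.Adj u z ∧ G.Adj v z ∧ G.dist z w ≤ k by
    obtain ⟨z, huz, hvz, hz⟩ := this
    exact ⟨z, huz, hvz, by have := hconn.dist_le_dist_add_one_of_adj huz w; omega⟩
  obtain ⟨x, hux, hx⟩ := hconn.exists_adj_dist_eq hu
  obtain ⟨y, hvy, hy⟩ := hconn.exists_adj_dist_eq hv
  have hxy_le := dist_le_two_of_adj_adj_adj hconn hbr hux huv hvy hu hx.le hy.le
  obtain hxy | hxy | hxy : G.dist x y = 0 ∨ G.dist x y = 1 ∨ G.dist x y = 1 + 1 := by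
    omega
  · obtain rfl := hconn.dist_eq_zero_iff.mp hxy
    exact ⟨x, hux, hvy, hx.le⟩
  · exact exists_common_adj_of_square hconn hbr huv hux hvy (dist_eq_one_iff_adj.mp hxy) hu hv
      hx.le hy.le
  obtain ⟨m, hxm, hmy⟩ := hconn.exists_adj_dist_eq hxy
  have hm_mem : m ∈ interval G x y := by
    show G.dist x m + G.dist m y = G.dist x y
    rw [dist_eq_one_iff_adj.mpr hxm, hmy, hxy]
  have hm : G.dist m w ≤ k := isConvexSet_ball hconn hbr w k x hx.le y hy.le hm_mem
  obtain ⟨h, hh, hmh⟩ := hbr _ (hconn.isConvexSet_pair huv)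
    x ⟨u, Or.inl rfl, (dist_eq_one_iff_adj.mpr hux.symm).le⟩
    y ⟨v, Or.inr rfl, (dist_eq_one_iff_adj.mpr hvy.symm).le⟩ hm_mem
  have hmh : G.Adj m h :=
    hconn.adj_of_dist_le_one hmh (by rintro rfl; rcases hh with rfl | rfl <;> omega)
  have hmy : G.Adj m y := dist_eq_one_iff_adj.mp hmy
  rcases hh with rfl | rfl
  · exact exists_common_adj_of_square hconn hbr huv hmh.symm hvy hmy hu hv hm hy.le
  · exact exists_common_adj_of_square hconn hbr huv hux hmh.symm hxm hu hv hx.le hm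

theorem eq_or_adj_of_adj_of_dist_eq (hconn : G.Connected) (hbr : Bridged G) {n : ℕ}
    (hsp : G.Adj s p) (hsq : G.Adj s q) (hs : G.dist s t = n + 1)
    (hp : G.dist p t = n) (hq : G.dist q t = n) : p = q ∨ G.Adj p q := by
  have hpq2 : G.dist p q ≤ 2 := by
    have := hconn.dist_le_dist_add_one_of_adj hsp.symm q
    rw [dist_eq_one_iff_adj.mpr hsq] at this
    exact this
  have hpq_ne2 : G.dist p q ≠ 2 := fun h2 => by
    have hs_mem : s ∈ interval G p q := by
      show G.dist p s + G.dist s q = G.dist p q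
      rw [dist_eq_one_iff_adj.mpr hsp.symm, dist_eq_one_iff_adj.mpr hsq, h2]
    have : G.dist s t ≤ n := isConvexSet_ball hconn hbr t n p hp.le q hq.le hs_mem
    omega
  by_cases hpq : p = q
  · exact Or.inl hpq
  · exact Or.inr (hconn.adj_of_dist_le_one (by omega) hpq)

theorem reconfigurable_cons_cons (hconn : G.Connected) (hbr : Bridged G) {n : ℕ}
    (hsp : G.Adj s p) (hsq : G.Adj s q) {A : G.Walk p t} {B : G.Walk q t}
    (hA : (A.cons hsp).length = G.dist s t) (hB : (B.cons hsq).length = G.dist s t)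
    (hs : G.dist s t = n + 1)
    (ih : ∀ a, G.dist a t = n → ∀ A B : G.Walk a t, A.length = G.dist a t →
      B.length = G.dist a t → Reconfigurable G a t A B) :
    Reconfigurable G s t (A.cons hsp) (B.cons hsq) := by
  obtain ⟨hA, hsp_dist⟩ := Walk.dist_eq_add_one_of_length_cons_eq_dist hA
  obtain ⟨hB, hsq_dist⟩ := Walk.dist_eq_add_one_of_length_cons_eq_dist hB
  have hp : G.dist p t = n := by omega
  have hq : G.dist q t = n := by omega
  rcases hbr.eq_or_adj_of_adj_of_dist_eq hconn hsp hsq hs hp hq with rfl | hpq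
  · exact (ih p hp A B hA hB).cons hsp hsp_dist
  obtain ⟨m, rfl⟩ : ∃ m, n = m + 1 := Nat.exists_eq_succ_of_ne_zero fun hn => hpq.ne <|
    (hconn.dist_eq_zero_iff.mp (hp.trans hn)).trans (hconn.dist_eq_zero_iff.mp (hq.trans hn)).symm
  obtain ⟨z, hpz, hqz, hz⟩ := hbr.triangle_condition hconn hpq hp hq
  obtain ⟨C, hC⟩ := hconn.exists_walk_length_eq_dist z t
  have hpC : (C.cons hpz).length = G.dist p t := by rw [Walk.length_cons, hC, hz, hp]
  have hqC : (C.cons hqz).length = G.dist q t := by rw [Walk.length_cons, hC, hz, hq]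
  have hswap : ShortestStep G s t ((C.cons hpz).cons hsp) ((C.cons hqz).cons hsq) :=
    ⟨by rw [Walk.length_cons, hpC, hsp_dist], by rw [Walk.length_cons, hqC, hsq_dist],
      by simpa only [Walk.support_cons] using (oneStep_cons_of_ne hpq.ne C.support).cons s⟩
  exact ((ih p hp A _ hA hpC).cons hsp hsp_dist).trans <|
    (Relation.ReflTransGen.single hswap).trans ((ih q hq _ B hqC hB).cons hsq hsq_dist)

end Bridged

end

theorem bridged_reconfigurable_general {V : Type*} (G : SimpleGraph V)
    (hconn : G.Connected) (hbr : Bridged G) (s t : V)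
    (P Q : G.Walk s t) (hP : P.length = G.dist s t) (hQ : Q.length = G.dist s t) :
    Reconfigurable G s t P Q := by
  induction hs : G.dist s t generalizing s with
  | zero =>
    obtain rfl := hconn.dist_eq_zero_iff.mp hs
    rw [Walk.eq_nil_iff_nil.mpr (Walk.length_eq_zero_iff.mp (hP.trans hs)),
      Walk.eq_nil_iff_nil.mpr (Walk.length_eq_zero_iff.mp (hQ.trans hs))]
    exact .refl
  | succ n ih =>
    cases P with
    | nil => simp at hs
    | cons hsp A =>
      cases Q with
      | nil => simp at hs
      | cons hsq B =>
        exact hbr.reconfigurable_cons_cons hconn hsp hsq hP hQ hs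
          fun a ha A B hA hB => ih a A B hA hB ha

/-- In a connected bridged graph, any two `s`–`t` shortest paths are reconfigurable. -/
theorem bridged_reconfigurable {V : Type*} [Fintype V] (G : SimpleGraph V)
    (hconn : G.Connected) (hbr : Bridged G) (s t : V)
    (P Q : G.Walk s t) (hP : P.length = G.dist s t) (hQ : Q.length = G.dist s t) :
    Reconfigurable G s t P Q :=
  bridged_reconfigurable_general G hconn hbr s t P Q hP hQ
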